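/- Under the standing assumptions on φ (smooth, α-exponentially concave, Condition positivity), for ξ, ξ' ∈ Ω with η = D^{(α)}φ(ξ) and η' = D^{(α)}φ(ξ'), one has c^{(α)}(ξ', η) - c^{(α)}(ξ, η) = (1/α) log(1 + α Dφ(ξ)·(ξ' - ξ)), where c^{(α)}(x,y) = (1/α) log(1 + α x·y). -/
import Mathlib


open scoped RealInnerProductSpace

noncomputable def alphaGrad {d : ℕ} (α : ℝ)
    (Dφ : EuclideanSpace ℝ (Fin d) → EuclideanSpace ℝ (Fin d))
    (ξ : EuclideanSpace ℝ (Fin d)) : EuclideanSpace ℝ (Fin d) :=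
  (1 - α * ⟪Dφ ξ, ξ⟫)⁻¹ • Dφ ξ

/-- Tangent-line positivity for an exponentially concave function. -/
lemma tangent_pos {d : ℕ} (Ω : Set (EuclideanSpace ℝ (Fin d)))
    (hconv : Convex ℝ Ω) (α : ℝ) (hα : 0 < α)
    (φ : EuclideanSpace ℝ (Fin d) → ℝ)
    (Dφ : EuclideanSpace ℝ (Fin d) → EuclideanSpace ℝ (Fin d))
    (hgrad : ∀ ζ ∈ Ω, HasGradientAt φ (Dφ ζ) ζ)
    (hconc : ConcaveOn ℝ Ω (fun ξ => Real.exp (α * φ ξ)))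
    (ξ : EuclideanSpace ℝ (Fin d)) (hξ : ξ ∈ Ω)
    (ξ' : EuclideanSpace ℝ (Fin d)) (hξ' : ξ' ∈ Ω) :
    0 < 1 + α * ⟪Dφ ξ, ξ' - ξ⟫ := by
  set v := ξ' - ξ with hv
  set g : ℝ → ℝ := fun t => Real.exp (α * φ (ξ + t • v)) with hg
  have hline : ∀ t : ℝ, t ∈ Set.Icc (0:ℝ) 1 → ξ + t • v ∈ Ω := by
    intro t ht
    have : ξ + t • v = (1 - t) • ξ + t • ξ' := by
      simp [hv, smul_sub, sub_smul]; abel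
    rw [this]
    exact hconv hξ hξ' (by linarith [ht.1, ht.2]) ht.1 (by linarith [ht.2])
  have hgconc : ConcaveOn ℝ (Set.Icc (0:ℝ) 1) g := by
    have haff : ConcaveOn ℝ
        ((AffineMap.lineMap ξ ξ' : ℝ →ᵃ[ℝ] EuclideanSpace ℝ (Fin d)) ⁻¹' Ω)
        ((fun x => Real.exp (α * φ x)) ∘
          (AffineMap.lineMap ξ ξ' : ℝ →ᵃ[ℝ] EuclideanSpace ℝ (Fin d))) :=
      hconc.comp_affineMap _
    have hsub : Set.Icc (0:ℝ) 1 ⊆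
        (AffineMap.lineMap ξ ξ' : ℝ →ᵃ[ℝ] EuclideanSpace ℝ (Fin d)) ⁻¹' Ω := by
      intro t ht
      simp only [Set.mem_preimage, AffineMap.lineMap_apply, vsub_eq_sub, vadd_eq_add]
      have h : t • (ξ' - ξ) + ξ = ξ + t • v := by rw [hv]; abel
      rw [h]
      exact hline t ht
    have hfun : g = ((fun x => Real.exp (α * φ x)) ∘
        (AffineMap.lineMap ξ ξ' : ℝ →ᵃ[ℝ] EuclideanSpace ℝ (Fin d))) := by
      funext t
      simp only [hg, Function.comp, AffineMap.lineMap_apply, vsub_eq_sub, vadd_eq_add, hv]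
      rw [add_comm]
    rw [hfun]
    exact haff.subset hsub (convex_Icc 0 1)
  -- derivative of g at 0
  have hderiv : HasDerivAt g (Real.exp (α * φ ξ) * (α * ⟪Dφ ξ, v⟫)) 0 := by
    have h1 : HasDerivAt (fun t : ℝ => ξ + t • v) v 0 := by
      simpa using ((hasDerivAt_id (0:ℝ)).smul_const v).const_add ξ
    have h2 : HasFDerivAt φ ((InnerProductSpace.toDual ℝ _) (Dφ ξ)) (ξ + (0:ℝ) • v) := by
      have := hgrad ξ hξ
      rwa [show ξ + (0:ℝ) • v = ξ by simp]
    have h3 : HasDerivAt (fun t : ℝ => φ (ξ + t • v)) ⟪Dφ ξ, v⟫ 0 := by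
      have hc := h2.comp_hasDerivAt (0:ℝ) h1
      rwa [InnerProductSpace.toDual_apply_apply] at hc
    have h4 : HasDerivAt (fun t : ℝ => α * φ (ξ + t • v)) (α * ⟪Dφ ξ, v⟫) 0 :=
      h3.const_mul α
    have h5 := h4.exp
    rw [show ξ + (0:ℝ) • v = ξ by simp] at h5
    exact h5
  -- tangent line inequality: g 1 ≤ g 0 + g'(0)
  have hkey : g 1 ≤ g 0 + Real.exp (α * φ ξ) * (α * ⟪Dφ ξ, v⟫) := by
    have hneg : ConvexOn ℝ (Set.Icc (0:ℝ) 1) (fun t => -g t) := hgconc.neg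
    have hd : HasDerivAt (fun t => -g t) (-(Real.exp (α * φ ξ) * (α * ⟪Dφ ξ, v⟫))) 0 :=
      hderiv.neg
    have hsl := hneg.le_slope_of_hasDerivAt (Set.left_mem_Icc.2 one_pos.le)
      (Set.right_mem_Icc.2 one_pos.le) one_pos hd
    have hs : slope (fun t => -g t) 0 1 = -(g 1) - -(g 0) := by
      simp [slope_def_field]
    rw [hs] at hsl
    linarith
  have hg1 : 0 < g 1 := Real.exp_pos _
  have hg0 : g 0 = Real.exp (α * φ ξ) := by simp [hg]
  have hE : 0 < Real.exp (α * φ ξ) := Real.exp_pos _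
  have hmul : 0 < Real.exp (α * φ ξ) * (1 + α * ⟪Dφ ξ, v⟫) := by
    calc (0:ℝ) < g 1 := hg1
    _ ≤ g 0 + Real.exp (α * φ ξ) * (α * ⟪Dφ ξ, v⟫) := hkey
    _ = Real.exp (α * φ ξ) * (1 + α * ⟪Dφ ξ, v⟫) := by rw [hg0]; ring
  rcases mul_pos_iff.mp hmul with ⟨_, h⟩ | ⟨h, _⟩
  · exact h
  · linarith

/-- `c^{(α)}(ξ', η) - c^{(α)}(ξ, η) = (1/α) log(1 + α Dφ(ξ)·(ξ' - ξ))`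
where `η = D^{(α)}φ(ξ)`. -/
theorem stmt9 {d : ℕ} (Ω : Set (EuclideanSpace ℝ (Fin d)))
    (hΩ : IsOpen Ω) (hconv : Convex ℝ Ω) (α : ℝ) (hα : 0 < α)
    (φ : EuclideanSpace ℝ (Fin d) → ℝ)
    (Dφ : EuclideanSpace ℝ (Fin d) → EuclideanSpace ℝ (Fin d))
    (hsmooth : ContDiffOn ℝ (⊤ : ℕ∞) φ Ω)
    (hgrad : ∀ ζ ∈ Ω, HasGradientAt φ (Dφ ζ) ζ)
    (hconc : ConcaveOn ℝ Ω (fun ξ => Real.exp (α * φ ξ)))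
    (hpos : ∀ ζ ∈ Ω, 0 < 1 - α * ⟪Dφ ζ, ζ⟫)
    (ξ : EuclideanSpace ℝ (Fin d)) (hξ : ξ ∈ Ω)
    (ξ' : EuclideanSpace ℝ (Fin d)) (hξ' : ξ' ∈ Ω) :
    (1/α) * Real.log (1 + α * ⟪ξ', alphaGrad α Dφ ξ⟫) -
      (1/α) * Real.log (1 + α * ⟪ξ, alphaGrad α Dφ ξ⟫) =
    (1/α) * Real.log (1 + α * ⟪Dφ ξ, ξ' - ξ⟫) := by
  have hT := tangent_pos Ω hconv α hα φ Dφ hgrad hconc ξ hξ ξ' hξ'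
  have hP := hpos ξ hξ
  have hin1 : ⟪ξ', alphaGrad α Dφ ξ⟫ = (1 - α * ⟪Dφ ξ, ξ⟫)⁻¹ * ⟪Dφ ξ, ξ'⟫ := by
    rw [alphaGrad, real_inner_smul_right, real_inner_comm ξ' (Dφ ξ)]
  have hin2 : ⟪ξ, alphaGrad α Dφ ξ⟫ = (1 - α * ⟪Dφ ξ, ξ⟫)⁻¹ * ⟪Dφ ξ, ξ⟫ := by
    rw [alphaGrad, real_inner_smul_right, real_inner_comm ξ (Dφ ξ)]
  have hsub : ⟪Dφ ξ, ξ' - ξ⟫ = ⟪Dφ ξ, ξ'⟫ - ⟪Dφ ξ, ξ⟫ := inner_sub_right _ _ _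
  -- abstract the inner products
  set a : ℝ := ⟪Dφ ξ, ξ'⟫
  set b : ℝ := ⟪Dφ ξ, ξ⟫
  rw [hin1, hin2, hsub]
  rw [hsub] at hT
  set D : ℝ := 1 - α * b with hD
  have hDne : D ≠ 0 := ne_of_gt hP
  have hA : 1 + α * (D⁻¹ * a) = (1 + α * (a - b)) / D := by
    field_simp
    rw [hD]; ring
  have hB : 1 + α * (D⁻¹ * b) = 1 / D := by
    field_simp
    rw [hD]; ring
  rw [hA, hB, Real.log_div (ne_of_gt hT) hDne, Real.log_div one_ne_zero hDne,
    Real.log_one]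
  ring
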